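/- For any finite undirected multigraph G, the number of acyclic fourientations of G equals the sum, over all orientations α of G, of 2^{|Acy(α)|}, where Acy(α) is the set of acyclic arcs of α. -/

import Mathlib

namespace SubgraphsVsOrientations

/-- The four possible configurations of an edge in a fourientation:
`zero` = 0-way, `forward`/`backward` = the two 1-way configurations (relative to
a reference direction of the edge), `two` = 2-way. -/
inductive Four : Type
  | zero | forward | backward | two
deriving DecidableEq

instance instFintypeFour : Fintype Four :=
  ⟨{Four.zero, Four.forward, Four.backward, Four.two}, fun x => by cases x <;> simp⟩

variable {V E : Type*}

/-- Whether configuration `c` allows traversal of the edge in direction `b`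
(`b = true` means from `src` to `tgt`). -/
def allows : Four → Bool → Prop
  | Four.zero, _ => False
  | Four.forward, b => b = true
  | Four.backward, b => b = false
  | Four.two, _ => True

/-- An edge configuration is solid if it is 0-way or 2-way. -/
def IsSolid (c : Four) : Prop := c = Four.zero ∨ c = Four.two

/-- A configuration is 1-way if it is `forward` or `backward`. -/
def IsOneWay (c : Four) : Prop := c = Four.forward ∨ c = Four.backward

/-- Reversing a configuration: swaps the two 1-way configurations,
fixes 0-way and 2-way. -/
def flipFour : Four → Four
  | Four.forward => Four.backward
  | Four.backward => Four.forward
  | c => c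

/-- The 1-way configuration corresponding to direction `b`. -/
def oneWayFour (b : Bool) : Four := if b then Four.forward else Four.backward

/-- Tail of the arc `(e, b)` (the edge `e` traversed in direction `b`). -/
def arcTail (src tgt : E → V) (a : E × Bool) : V := if a.2 then src a.1 else tgt a.1

/-- Head of the arc `(e, b)`. -/
def arcHead (src tgt : E → V) (a : E × Bool) : V := if a.2 then tgt a.1 else src a.1

/-- One-step relation of the digraph `G⃗(A,B;φ)`: there is an arc from `x` to `y`, either
a traversable directed edge of the fourientation `φ`, or an extra arc from `A ∪ B`. -/
def arcStep (src tgt : E → V) (A B : Set (V × V)) (φ : E → Four) (x y : V) : Prop :=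
  (∃ a : E × Bool, allows (φ a.1) a.2 ∧ arcTail src tgt a = x ∧ arcHead src tgt a = y)
    ∨ (x, y) ∈ A ∪ B

/-- Reachability by a directed path in the digraph `G⃗(A,B;φ)`. -/
def reach (src tgt : E → V) (A B : Set (V × V)) (φ : E → Four) : V → V → Prop :=
  Relation.ReflTransGen (arcStep src tgt A B φ)

/-- A fourientation `φ` is `(A,B)`-valid: in `G⃗(A,B;φ)`, for every `(u,v) ∈ A` the vertex `v`
cannot reach `u`, and for every `(u,v) ∈ B` the vertex `v` can reach `u`. -/
def IsValid (src tgt : E → V) (A B : Set (V × V)) (φ : E → Four) : Prop :=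
  (∀ p ∈ A, ¬ reach src tgt A B φ p.2 p.1) ∧ (∀ p ∈ B, reach src tgt A B φ p.2 p.1)

/-- The set of solid edges of a fourientation. -/
def solidSet (φ : E → Four) : Set E := {e | IsSolid (φ e)}

/-- The fourientation associated to an orientation `σ : E → Bool` (every edge 1-way). -/
def toFour (σ : E → Bool) : E → Four := fun e => oneWayFour (σ e)

open Classical in
/-- The fourientation associated to a (spanning) subgraph `F ⊆ E`: edges of `F` are 2-way,
the other edges are 0-way. -/
noncomputable def toFourSub (F : Set E) : E → Four :=
  fun e => if e ∈ F then Four.two else Four.zero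

/-- The arc `(e,b)` is the arc of a 1-way edge of `φ`. -/
def oneWayArc (φ : E → Four) (a : E × Bool) : Prop := φ a.1 = oneWayFour a.2

/-- `Cyc(φ)`: the set of cyclic 1-way edges (arcs) of the fourientation `φ`, in the digraph
`G⃗(A,B;φ)`: the head of the arc can reach its tail. -/
def CycSet (src tgt : E → V) (A B : Set (V × V)) (φ : E → Four) : Set (E × Bool) :=
  {a | oneWayArc φ a ∧ reach src tgt A B φ (arcHead src tgt a) (arcTail src tgt a)}

/-- `Acy(φ)`: the set of acyclic 1-way edges (arcs) of the fourientation `φ`. -/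
def AcySet (src tgt : E → V) (A B : Set (V × V)) (φ : E → Four) : Set (E × Bool) :=
  {a | oneWayArc φ a ∧ ¬ reach src tgt A B φ (arcHead src tgt a) (arcTail src tgt a)}

/-- `l` is (the arc sequence of) a directed cycle: a nonempty closed chain of arcs
visiting no vertex twice. -/
def IsDirCycle (src tgt : E → V) (l : List (E × Bool)) : Prop :=
  ∃ h : l ≠ [],
    l.Chain' (fun a b => arcHead src tgt a = arcTail src tgt b) ∧
    arcHead src tgt (l.getLast h) = arcTail src tgt (l.head h) ∧
    (l.map (arcTail src tgt)).Nodup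

/-- Reversing the directed cycle `l` in the fourientation `φ`: all 1-way edges on the cycle are
reversed, other edges (in particular 2-way edges of the cycle) are unchanged. -/
def revCyc [DecidableEq E] (φ : E → Four) (l : List (E × Bool)) : E → Four :=
  fun e => if (e, true) ∈ l ∨ (e, false) ∈ l then flipFour (φ e) else φ e

/-- One cycle-reversal move: `ψ` is obtained from `φ` by reversing a directed cycle of `φ`. -/
def CycleStep (src tgt : E → V) [DecidableEq E] (φ ψ : E → Four) : Prop :=
  ∃ l, IsDirCycle src tgt l ∧ (∀ a ∈ l, allows (φ a.1) a.2) ∧ ψ = revCyc φ l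

/-- The edge `e` crosses the cut given by `V1` (in either direction). -/
def edgeCrosses (src tgt : E → V) (V1 : Set V) (e : E) : Prop :=
  (src e ∈ V1 ∧ tgt e ∉ V1) ∨ (tgt e ∈ V1 ∧ src e ∉ V1)

/-- The cut `V1 / V1ᶜ` defines a directed `(A,B)`-cocycle of `G⃗(A,B;φ)`: the set of arcs from
`V1` to `V1ᶜ` is nonempty, no arc of the digraph goes from `V1ᶜ` to `V1`, and no arc of
`A ∪ B` crosses the cut (in either direction). -/
def IsABCocycleCut (src tgt : E → V) (A B : Set (V × V)) (φ : E → Four) (V1 : Set V) : Prop :=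
  (∃ a : E × Bool, allows (φ a.1) a.2 ∧ arcTail src tgt a ∈ V1 ∧ arcHead src tgt a ∉ V1) ∧
  (∀ a : E × Bool, allows (φ a.1) a.2 → ¬ (arcTail src tgt a ∉ V1 ∧ arcHead src tgt a ∈ V1)) ∧
  (∀ p ∈ A ∪ B, ((p : V × V).1 ∈ V1 ↔ p.2 ∈ V1))

open Classical in
/-- Reversing the directed cocycle given by the cut `V1`: all 1-way edges crossing the cut are
reversed, other edges (in particular 0-way edges crossing the cut) are unchanged. -/
noncomputable def revCut (src tgt : E → V) (φ : E → Four) (V1 : Set V) : E → Four :=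
  fun e => if edgeCrosses src tgt V1 e then flipFour (φ e) else φ e

/-- One cocycle-reversal move: `ψ` is obtained from `φ` by reversing a directed
`(A,B)`-cocycle of `φ`. -/
def CocycleStep (src tgt : E → V) (A B : Set (V × V)) (φ ψ : E → Four) : Prop :=
  ∃ V1 : Set V, IsABCocycleCut src tgt A B φ V1 ∧ ψ = revCut src tgt φ V1

/-- One cycle- or cocycle-reversal move. -/
def CCStep (src tgt : E → V) (A B : Set (V × V)) [DecidableEq E] (φ ψ : E → Four) : Prop :=
  CycleStep src tgt φ ψ ∨ CocycleStep src tgt A B φ ψ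

/-- `φ` contains no cycle (of the graph `G`) made entirely of 2-way edges. -/
def NoTwoWayCycle (src tgt : E → V) (φ : E → Four) : Prop :=
  ¬ ∃ l : List (E × Bool), IsDirCycle src tgt l ∧ (l.map Prod.fst).Nodup ∧
      ∀ a ∈ l, φ a.1 = Four.two

/-- `φ` contains no `(A,B)`-cocycle (of the graph `G`) made entirely of 0-way edges:
there is no cut, not crossed by any arc of `A ∪ B`, crossed by at least one edge of `G`,
all of whose crossing edges are 0-way. -/
def NoZeroWayCocycle (src tgt : E → V) (A B : Set (V × V)) (φ : E → Four) : Prop :=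
  ¬ ∃ V1 : Set V, (∃ e, edgeCrosses src tgt V1 e) ∧
      (∀ e, edgeCrosses src tgt V1 e → φ e = Four.zero) ∧
      (∀ p ∈ A ∪ B, ((p : V × V).1 ∈ V1 ↔ p.2 ∈ V1))

/-- The subgraph `F` contains no cycle (it is a forest). -/
def NoCycleIn (src tgt : E → V) (F : Set E) : Prop :=
  ¬ ∃ l : List (E × Bool), IsDirCycle src tgt l ∧ (l.map Prod.fst).Nodup ∧ ∀ a ∈ l, a.1 ∈ F

/-- One undirected adjacency step in the graph `F ∪ A̲ ∪ B̲`. -/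
def usym (src tgt : E → V) (A B : Set (V × V)) (F : Set E) (x y : V) : Prop :=
  (∃ e ∈ F, (src e = x ∧ tgt e = y) ∨ (src e = y ∧ tgt e = x)) ∨
  (∃ p ∈ A ∪ B, ((p : V × V) = (x, y) ∨ p = (y, x)))

/-- Connectivity (by undirected paths) in the graph `F ∪ A̲ ∪ B̲`. -/
def ureach (src tgt : E → V) (A B : Set (V × V)) (F : Set E) : V → V → Prop :=
  Relation.ReflTransGen (usym src tgt A B F)

/-- The subgraph `F` is `(A,B)`-connected: the connected components of `F ∪ A̲ ∪ B̲`
coincide with those of `G ∪ A̲ ∪ B̲`. -/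
def ABConnected (src tgt : E → V) (A B : Set (V × V)) (F : Set E) : Prop :=
  ∀ x y, ureach src tgt A B F x y ↔ ureach src tgt A B Set.univ x y

/-!
Mark some edges of a fourientation and require only the marked 1-way arcs to be acyclic.
Acyclic fourientations are the configurations with every edge marked, while pairs `(σ, S)` with
`S ⊆ Acy(σ)` are the configurations with every edge 1-way, marked exactly on `S`. The two counts
agree because they can be exchanged one edge at a time: with the rest fixed, the marked 0-way and
2-way states of an edge `e` count as much as its two unmarked 1-way states. Let `P` say that the
marked arcs are acyclic once `e` is deleted, and `F`, `B` that adding `e` back as an arc in one,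
resp. the other, direction closes no cycle through a marked arc. The four states are counted by
`P`, `P ∧ F ∧ B` against `P ∧ F`, `P ∧ B`, and these agree since `P` forces `F ∨ B`: two
offending cycles splice into a cycle through a marked arc avoiding `e`.
-/

open Function

theorem sum_fin_comp_eq_of_sum_update_eq {α β γ M : Type*} [Fintype β] [Fintype γ]
    [AddCommMonoid M] (u : β → α) (v : γ → α) :
    ∀ (n : ℕ) (f : (Fin n → α) → M),
      (∀ ρ i, ∑ b, f (update ρ i (u b)) = ∑ c, f (update ρ i (v c))) →
      ∑ x : Fin n → β, f (u ∘ x) = ∑ y : Fin n → γ, f (v ∘ y)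
  | 0, f, _ => by simp [Subsingleton.elim (u ∘ default) (v ∘ default)]
  | n + 1, f, h => by
    rcases isEmpty_or_nonempty α with hα | ⟨⟨a⟩⟩
    · have : IsEmpty β := ⟨fun b => hα.false (u b)⟩
      have : IsEmpty γ := ⟨fun c => hα.false (v c)⟩
      simp
    calc ∑ x : Fin (n + 1) → β, f (u ∘ x)
        = ∑ b, ∑ x : Fin n → β, f (Fin.cons (u b) (u ∘ x)) := by
          rw [← (Fin.consEquiv fun _ => β).sum_comp, Fintype.sum_prod_type]
          simp [Fin.consEquiv, Fin.comp_cons]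
      _ = ∑ b, ∑ y : Fin n → γ, f (Fin.cons (u b) (v ∘ y)) := by
          refine Finset.sum_congr rfl fun b _ =>
            sum_fin_comp_eq_of_sum_update_eq u v n (fun ρ => f (Fin.cons (u b) ρ)) fun ρ i => ?_
          simpa only [Fin.cons_update] using h (Fin.cons (u b) ρ) i.succ
      _ = ∑ y : Fin n → γ, ∑ c, f (Fin.cons (v c) (v ∘ y)) := by
          rw [Finset.sum_comm]
          refine Finset.sum_congr rfl fun y _ => ?_
          simpa only [Fin.update_cons_zero] using h (Fin.cons a (v ∘ y)) 0
      _ = ∑ y : Fin (n + 1) → γ, f (v ∘ y) := by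
          rw [Finset.sum_comm, ← (Fin.consEquiv fun _ => γ).sum_comp, Fintype.sum_prod_type]
          simp [Fin.consEquiv, Fin.comp_cons]

theorem sum_comp_eq_of_sum_update_eq {ι α β γ M : Type*} [Fintype ι] [DecidableEq ι]
    [Fintype β] [Fintype γ] [AddCommMonoid M] (f : (ι → α) → M) (u : β → α) (v : γ → α)
    (h : ∀ ρ i, ∑ b, f (update ρ i (u b)) = ∑ c, f (update ρ i (v c))) :
    ∑ x : ι → β, f (u ∘ x) = ∑ y : ι → γ, f (v ∘ y) := by
  let e := Fintype.equivFin ι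
  have key := sum_fin_comp_eq_of_sum_update_eq u v _ (fun ρ => f (ρ ∘ e)) fun ρ i => by
    simpa only [update_comp_equiv] using h (ρ ∘ e) (e.symm i)
  rw [← (e.arrowCongr (Equiv.refl β)).symm.sum_comp,
    ← (e.arrowCongr (Equiv.refl γ)).symm.sum_comp]
  simpa [Equiv.arrowCongr, comp_assoc] using key

section UpdateEdge

variable [DecidableEq E] {src tgt : E → V} {A B : Set (V × V)} {φ : E → Four} {e₀ : E}
  {c : Four}

theorem arcStep_update_iff {x y : V} :
    arcStep src tgt A B (update φ e₀ c) x y ↔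
      arcStep src tgt A B (update φ e₀ .zero) x y ∨
        (allows c true ∧ x = src e₀ ∧ y = tgt e₀) ∨
        (allows c false ∧ x = tgt e₀ ∧ y = src e₀) := by
  constructor
  · rintro (⟨⟨e, b⟩, hab, rfl, rfl⟩ | hAB)
    · by_cases he : e = e₀
      · subst he
        cases b <;> simp_all [arcTail, arcHead]
      · exact Or.inl (Or.inl ⟨(e, b), by simpa [he] using hab, rfl, rfl⟩)
    · exact Or.inl (Or.inr hAB)
  · rintro ((⟨⟨e, b⟩, hab, rfl, rfl⟩ | hAB) | ⟨hc, rfl, rfl⟩ | ⟨hc, rfl, rfl⟩)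
    · by_cases he : e = e₀
      · subst he
        simp [allows] at hab
      · exact Or.inl ⟨(e, b), by simpa [he] using hab, rfl, rfl⟩
    · exact Or.inr hAB
    · exact Or.inl ⟨(e₀, true), by simpa using hc, by simp [arcTail], by simp [arcHead]⟩
    · exact Or.inl ⟨(e₀, false), by simpa using hc, by simp [arcTail], by simp [arcHead]⟩

theorem reach_update_iff {x y : V} :
    reach src tgt A B (update φ e₀ c) x y ↔
      reach src tgt A B (update φ e₀ .zero) x y ∨
        (allows c true ∧ reach src tgt A B (update φ e₀ .zero) x (src e₀) ∧
          reach src tgt A B (update φ e₀ .zero) (tgt e₀) y) ∨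
        (allows c false ∧ reach src tgt A B (update φ e₀ .zero) x (tgt e₀) ∧
          reach src tgt A B (update φ e₀ .zero) (src e₀) y) := by
  have mono : ∀ {x y}, reach src tgt A B (update φ e₀ .zero) x y →
      reach src tgt A B (update φ e₀ c) x y :=
    fun h => Relation.ReflTransGen.mono (fun _ _ h => arcStep_update_iff.mpr (Or.inl h)) _ _ h
  constructor
  · intro h
    induction h using Relation.ReflTransGen.head_induction_on with
    | refl => exact Or.inl .refl
    | head hxz _ ih =>
      rcases arcStep_update_iff.mp hxz with hxz | ⟨hc, rfl, rfl⟩ | ⟨hc, rfl, rfl⟩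
      · rcases ih with h | ⟨hc, h₁, h₂⟩ | ⟨hc, h₁, h₂⟩
        exacts [Or.inl (.head hxz h), Or.inr (Or.inl ⟨hc, .head hxz h₁, h₂⟩),
          Or.inr (Or.inr ⟨hc, .head hxz h₁, h₂⟩)]
      · rcases ih with h | ⟨-, -, h⟩ | ⟨-, -, h⟩
        exacts [Or.inr (Or.inl ⟨hc, .refl, h⟩), Or.inr (Or.inl ⟨hc, .refl, h⟩), Or.inl h]
      · rcases ih with h | ⟨-, -, h⟩ | ⟨-, -, h⟩
        exacts [Or.inr (Or.inr ⟨hc, .refl, h⟩), Or.inl h, Or.inr (Or.inr ⟨hc, .refl, h⟩)]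
  · rintro (h | ⟨hc, h₁, h₂⟩ | ⟨hc, h₁, h₂⟩)
    · exact mono h
    · exact (mono h₁).trans (.head (arcStep_update_iff.mpr (Or.inr (Or.inl ⟨hc, rfl, rfl⟩)))
        (mono h₂))
    · exact (mono h₁).trans (.head (arcStep_update_iff.mpr (Or.inr (Or.inr ⟨hc, rfl, rfl⟩)))
        (mono h₂))

end UpdateEdge

def AcyclicOn (src tgt : E → V) (A B : Set (V × V)) (W : Set E) (φ : E → Four) : Prop :=
  ∀ a : E × Bool, a.1 ∈ W → oneWayArc φ a →
    ¬ reach src tgt A B φ (arcHead src tgt a) (arcTail src tgt a)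

/-- Adding an arc `x → y` to `φ` closes no directed cycle through a 1-way arc on `W`. -/
def NoCycleVia (src tgt : E → V) (A B : Set (V × V)) (W : Set E) (φ : E → Four) (x y : V) :
    Prop :=
  ∀ a : E × Bool, a.1 ∈ W → oneWayArc φ a →
    ¬ (reach src tgt A B φ (arcHead src tgt a) x ∧ reach src tgt A B φ y (arcTail src tgt a))

section Exchange

variable {src tgt : E → V} {A B : Set (V × V)} {W : Set E} {φ : E → Four}

theorem AcyclicOn.noCycleVia_or_noCycleVia (h : AcyclicOn src tgt A B W φ) (x y : V) :
    NoCycleVia src tgt A B W φ x y ∨ NoCycleVia src tgt A B W φ y x := by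
  by_contra! ⟨hxy, hyx⟩
  simp only [NoCycleVia, not_forall, not_not] at hxy hyx
  obtain ⟨a, -, ha, hax, hya⟩ := hxy
  obtain ⟨b, hbW, hb, hby, hxb⟩ := hyx
  have hstep : reach src tgt A B φ (arcTail src tgt a) (arcHead src tgt a) :=
    .single (Or.inl ⟨a, by rw [ha]; cases a.2 <;> rfl, rfl, rfl⟩)
  exact h b hbW hb (hby.trans (hya.trans (hstep.trans (hax.trans hxb))))

variable [DecidableEq E] {e₀ : E}

theorem acyclicOn_update_iff (he₀ : e₀ ∉ W) (c : Four) :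
    AcyclicOn src tgt A B W (update φ e₀ c) ↔
      AcyclicOn src tgt A B W (update φ e₀ .zero) ∧
        (allows c true → NoCycleVia src tgt A B W (update φ e₀ .zero) (src e₀) (tgt e₀)) ∧
        (allows c false → NoCycleVia src tgt A B W (update φ e₀ .zero) (tgt e₀) (src e₀)) := by
  have hArc : ∀ a : E × Bool, a.1 ∈ W →
      (oneWayArc (update φ e₀ c) a ↔ oneWayArc (update φ e₀ .zero) a) := fun a ha => by
    simp [oneWayArc, show a.1 ≠ e₀ from fun h => he₀ (h ▸ ha)]
  simp only [AcyclicOn, NoCycleVia, reach_update_iff (c := c)]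
  constructor
  · intro h
    refine ⟨fun a ha h₁ => ?_, fun hc a ha h₁ => ?_, fun hc a ha h₁ => ?_⟩ <;>
      have := h a ha ((hArc a ha).2 h₁) <;> tauto
  · rintro ⟨h₀, hF, hB⟩ a ha h₁
    rw [hArc a ha] at h₁
    have := h₀ a ha h₁
    have := fun hc => hF hc a ha h₁
    have := fun hc => hB hc a ha h₁
    tauto

open Classical in
theorem ite_acyclicOn_update_forward_add_backward (he₀ : e₀ ∉ W) :
    (if AcyclicOn src tgt A B W (update φ e₀ .forward) then 1 else 0) +
        (if AcyclicOn src tgt A B W (update φ e₀ .backward) then 1 else 0) =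
      (if AcyclicOn src tgt A B W (update φ e₀ .zero) then 1 else 0) +
        (if AcyclicOn src tgt A B W (update φ e₀ .two) then 1 else 0) := by
  have hPFB (h : AcyclicOn src tgt A B W (update φ e₀ .zero)) :=
    h.noCycleVia_or_noCycleVia (src e₀) (tgt e₀)
  simp only [acyclicOn_update_iff he₀ .forward, acyclicOn_update_iff he₀ .backward,
    acyclicOn_update_iff he₀ .two, allows]
  generalize AcyclicOn src tgt A B W (update φ e₀ .zero) = P at *
  generalize NoCycleVia src tgt A B W (update φ e₀ .zero) (src e₀) (tgt e₀) = F at *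
  generalize NoCycleVia src tgt A B W (update φ e₀ .zero) (tgt e₀) (src e₀) = B at *
  by_cases P <;> by_cases F <;> by_cases B <;> simp_all

end Exchange

theorem sum_four {M : Type*} [AddCommMonoid M] (f : Four → M) :
    ∑ c, f c = f .zero + f .forward + f .backward + f .two := by
  simp [Finset.univ, Fintype.elems, add_assoc]

section Marked

variable {src tgt : E → V} {A B : Set (V × V)} {W : Set E} {φ : E → Four}

theorem acyclicOn_insert_iff {i : E} (hi : ∀ b, φ i ≠ oneWayFour b) :
    AcyclicOn src tgt A B (insert i W) φ ↔ AcyclicOn src tgt A B W φ := by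
  refine ⟨fun h a ha => h a (.inr ha), fun h a ha h₁ => ?_⟩
  rcases ha with ha | ha
  · exact absurd (ha ▸ h₁) (hi a.2)
  · exact h a ha h₁

open Classical in
/-- A fourientation in which some edges are marked (second component); only the marked 1-way
arcs are required to be acyclic. -/
noncomputable def markedAcyclicIndicator (src tgt : E → V) (A B : Set (V × V))
    (χ : E → Four × Bool) : ℕ :=
  if AcyclicOn src tgt A B {e | (χ e).2} (Prod.fst ∘ χ) then 1 else 0

open Classical in
theorem sum_markedAcyclicIndicator_update [DecidableEq E] (ρ : E → Four × Bool) (i : E) :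
    ∑ c, markedAcyclicIndicator src tgt A B (update ρ i (c, true)) =
      ∑ p : Bool × Bool,
        markedAcyclicIndicator src tgt A B (update ρ i (oneWayFour p.1, p.2)) := by
  set W := {e | (ρ e).2} \ {i}
  have hi : i ∉ W := by simp [W]
  have hmarked (c : Four) (m : Bool) :
      markedAcyclicIndicator src tgt A B (update ρ i (c, m)) =
        if AcyclicOn src tgt A B (if m then insert i W else W) (update (Prod.fst ∘ ρ) i c)
        then 1 else 0 := by
    refine if_congr ?_ rfl rfl
    rw [comp_update]
    congr! 1
    ext e
    by_cases he : e = i <;> cases m <;> simp [he, W]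
  have hsolid (c : Four) (hc : ∀ b, c ≠ oneWayFour b) :
      AcyclicOn src tgt A B (insert i W) (update (Prod.fst ∘ ρ) i c) ↔
        AcyclicOn src tgt A B W (update (Prod.fst ∘ ρ) i c) :=
    acyclicOn_insert_iff (by simpa using hc)
  have key := ite_acyclicOn_update_forward_add_backward (src := src) (tgt := tgt) (A := A) (B := B)
    (φ := Prod.fst ∘ ρ) hi
  simp only [sum_four, Fintype.sum_prod_type, Fintype.sum_bool, hmarked, oneWayFour,
    if_true, Bool.false_eq_true, if_false]
  simp only [hsolid .zero (by simp [oneWayFour]), hsolid .two (by simp [oneWayFour])]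
  omega

end Marked

open Classical in
theorem sum_ite_forall_imp_mem {ι : Type*} [Fintype ι] [DecidableEq ι] (D : Set ι) :
    ∑ S : ι → Bool, (if ∀ i, S i = true → i ∈ D then 1 else 0) = 2 ^ D.ncard := by
  calc ∑ S : ι → Bool, (if ∀ i, S i = true → i ∈ D then 1 else 0)
      = ∑ S : ι → Bool, ∏ i, (if S i = true → i ∈ D then 1 else 0) := by
        simp [Finset.prod_boole]
    _ = ∏ i, ∑ b : Bool, (if b = true → i ∈ D then 1 else 0) :=
        (Fintype.prod_sum fun i (b : Bool) => if b = true → i ∈ D then 1 else 0).symm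
    _ = ∏ i, (if i ∈ D.toFinset then 2 else 1) := by
        refine Finset.prod_congr rfl fun i _ => ?_
        by_cases hi : i ∈ D <;> simp [hi]
    _ = 2 ^ D.ncard := by
        rw [Finset.prod_ite_mem, Finset.univ_inter, Finset.prod_const,
          Set.ncard_eq_toFinset_card']

section Orientations

variable {src tgt : E → V} {A B : Set (V × V)} {σ : E → Bool}

theorem oneWayArc_toFour_iff {a : E × Bool} : oneWayArc (toFour σ) a ↔ a.2 = σ a.1 := by
  obtain ⟨e, b⟩ := a
  cases h : σ e <;> cases b <;> simp [oneWayArc, toFour, oneWayFour, h]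

theorem acyclicOn_toFour_iff {W : Set E} :
    AcyclicOn src tgt A B W (toFour σ) ↔ ∀ e ∈ W, (e, σ e) ∈ AcySet src tgt A B (toFour σ) := by
  constructor
  · exact fun h e he => ⟨oneWayArc_toFour_iff.mpr rfl, h _ he (oneWayArc_toFour_iff.mpr rfl)⟩
  · rintro h ⟨e, b⟩ he hb
    obtain rfl : b = σ e := oneWayArc_toFour_iff.mp hb
    exact (h e he).2

theorem ncard_acySet_toFour :
    (AcySet src tgt A B (toFour σ)).ncard =
      {e | (e, σ e) ∈ AcySet src tgt A B (toFour σ)}.ncard := by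
  have hrange : AcySet src tgt A B (toFour σ) ⊆ Set.range fun e => (e, σ e) :=
    fun a ha => ⟨a.1, Prod.ext rfl (oneWayArc_toFour_iff.mp ha.1).symm⟩
  nth_rw 1 [← Set.image_preimage_eq_of_subset hrange]
  exact Set.ncard_image_of_injective _ fun e₁ e₂ h => congrArg Prod.fst h

open Classical in
theorem sum_markedAcyclicIndicator_toFour [Fintype E] [DecidableEq E] :
    ∑ S : E → Bool, markedAcyclicIndicator src tgt A B (fun e => (toFour σ e, S e)) =
      2 ^ (AcySet src tgt A B (toFour σ)).ncard := by
  rw [ncard_acySet_toFour, ← sum_ite_forall_imp_mem]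
  refine Finset.sum_congr rfl fun S _ => if_congr ?_ rfl rfl
  exact acyclicOn_toFour_iff

end Orientations

theorem card_acyclic_eq_sum_two_pow_ncard_acySet [Fintype E] [DecidableEq E] (src tgt : E → V)
    (A B : Set (V × V)) :
    Nat.card {φ : E → Four //
        ∀ a : E × Bool, oneWayArc φ a →
          ¬ reach src tgt A B φ (arcHead src tgt a) (arcTail src tgt a)} =
    ∑ σ : E → Bool, 2 ^ (AcySet src tgt A B (toFour σ)).ncard := by
  classical
  calc _ = ∑ φ : E → Four, markedAcyclicIndicator src tgt A B (fun e => (φ e, true)) := by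
        rw [Nat.card_eq_fintype_card, Fintype.card_subtype, Finset.card_filter]
        refine Finset.sum_congr rfl fun φ _ => if_congr ?_ rfl rfl
        simp [AcyclicOn, comp_def]
    _ = ∑ y : E → Bool × Bool,
          markedAcyclicIndicator src tgt A B (fun e => (oneWayFour (y e).1, (y e).2)) :=
        sum_comp_eq_of_sum_update_eq (markedAcyclicIndicator src tgt A B) (fun c => (c, true))
          (fun p : Bool × Bool => (oneWayFour p.1, p.2)) sum_markedAcyclicIndicator_update
    _ = ∑ σ : E → Bool, ∑ S : E → Bool,
          markedAcyclicIndicator src tgt A B (fun e => (toFour σ e, S e)) := by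
        rw [← (Equiv.arrowProdEquivProdArrow _ _ _).symm.sum_comp, Fintype.sum_prod_type]
        rfl
    _ = _ := Finset.sum_congr rfl fun σ _ => sum_markedAcyclicIndicator_toFour

theorem statement3_general {V E : Type*} [Fintype E] [DecidableEq E] (src tgt : E → V) :
    Nat.card {φ : E → Four //
        ∀ a : E × Bool, oneWayArc φ a →
          ¬ reach src tgt ∅ ∅ φ (arcHead src tgt a) (arcTail src tgt a)} =
    ∑ σ : E → Bool, 2 ^ (AcySet src tgt ∅ ∅ (toFour σ)).ncard :=
  card_acyclic_eq_sum_two_pow_ncard_acySet src tgt ∅ ∅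

/-- The number of acyclic fourientations of a finite graph `G` (fourientations
all of whose 1-way edges are acyclic) equals `∑_α 2^{|Acy(α)|}`, the sum being over all
orientations `α` of `G`. -/
theorem statement3 {V E : Type*} [Fintype V] [Fintype E] [DecidableEq E] (src tgt : E → V) :
    Nat.card {φ : E → Four //
        ∀ a : E × Bool, oneWayArc φ a →
          ¬ reach src tgt ∅ ∅ φ (arcHead src tgt a) (arcTail src tgt a)} =
    ∑ σ : E → Bool, 2 ^ (AcySet src tgt ∅ ∅ (toFour σ)).ncard :=
  statement3_general src tgt
end SubgraphsVsOrientations
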